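/- arXiv:2310.10393 — 3 statements merged into one kernel-verified Lean document; each statement's English description precedes it below -/
import Mathlib

section
/- Suppose that for each k ∈ {1,…,K}, ψ_{k,n} → ψ_{k,P} in probability, that Π_{k=1}^K ψ_{k,P} ≠ 0, and that the sequence (Σ_n) is bounded in probability. Then for every α ∈ (0,1), P(R_{n,α}) → 1 as n → ∞; that is, the power of the proposed test converges to one under fixed alternatives. -/
/-!
Under the alternative, `∏ ψ_{k,n} → ∏ ψ_{k,P} ≠ 0` in probability, so `n (∏ ψ_{k,n})²` exceeds
any fixed level with probability tending to one. The statistic's denominator `γ_n' Σ_n γ_n` is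
bounded in probability: `γ_n` is a continuous function of `(ψ_{k,n})_k`, hence converges in
probability and is bounded in probability, and `|γ' Σ γ| ≤ K² ‖γ‖² ‖Σ‖`.
-/

open MeasureTheory ProbabilityTheory Filter

/-- The `p`-th quantile of the standard normal distribution:
`q_p := inf {x : ℝ | p ≤ Φ(x)}` where `Φ` is the standard normal CDF. -/
noncomputable def stdNormalQuantile (p : ℝ) : ℝ :=
  sInf {x : ℝ | p ≤ ProbabilityTheory.cdf (gaussianReal 0 1) x}

open Topology ENNReal

namespace MeasureTheory

variable {Ω ι : Type*} {m : MeasurableSpace Ω} {μ : Measure Ω} {l : Filter ι}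

def BoundedInProbability {E : Type*} [Norm E] (μ : Measure Ω) (X : ι → Ω → E) (l : Filter ι) :
    Prop :=
  ∀ ε : ℝ, 0 < ε → ∃ M : ℝ, limsup (fun i => μ {ω | M < ‖X i ω‖}) l ≤ ENNReal.ofReal ε

namespace BoundedInProbability

variable {E : Type*} [Norm E] {X : ι → Ω → E}

lemma of_eventually (h : ∀ ε : ℝ≥0∞, 0 < ε → ∃ M : ℝ, ∀ᶠ i in l, μ {ω | M < ‖X i ω‖} ≤ ε) :
    BoundedInProbability μ X l :=
  fun _ hε => (h _ (ENNReal.ofReal_pos.2 hε)).imp fun _ hM =>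
    limsup_le_of_le (by isBoundedDefault) hM

lemma exists_eventually_measure_lt (h : BoundedInProbability μ X l) {ε : ℝ≥0∞}
    (hε : 0 < ε) : ∃ M : ℝ, ∀ᶠ i in l, μ {ω | M < ‖X i ω‖} < ε := by
  obtain ⟨r, -, hr, hrε⟩ := ENNReal.lt_iff_exists_real_btwn.1 hε
  obtain ⟨M, hM⟩ := h r (ENNReal.ofReal_pos.1 hr)
  exact ⟨M, eventually_lt_of_limsup_lt (hM.trans_lt hrε)⟩

lemma const_mul {X : ι → Ω → ℝ} (hX : BoundedInProbability μ X l) (c : ℝ) :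
    BoundedInProbability μ (fun i ω => c * X i ω) l := by
  refine of_eventually fun ε hε => ?_
  obtain ⟨M, hM⟩ := hX.exists_eventually_measure_lt hε
  refine ⟨|c| * M, hM.mono fun i hi => (measure_mono fun ω hω => ?_).trans hi.le⟩
  simp only [Set.mem_ofPred_eq, Real.norm_eq_abs, abs_mul] at hω ⊢
  exact lt_of_mul_lt_mul_left hω (abs_nonneg c)

end BoundedInProbability

lemma TendstoInMeasure.boundedInProbability {E : Type*} [SeminormedAddCommGroup E]
    {f : ι → Ω → E} {x : E} (hf : TendstoInMeasure μ f l fun _ => x) :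
    BoundedInProbability μ f l := by
  refine .of_eventually fun ε hε => ⟨‖x‖ + 1, ?_⟩
  filter_upwards [ENNReal.tendsto_nhds_zero.1 (tendstoInMeasure_iff_norm.1 hf 1 one_pos) ε hε]
    with i hi
  refine (measure_mono fun ω (hω : ‖x‖ + 1 < ‖f i ω‖) => ?_).trans hi
  have := norm_sub_norm_le (f i ω) x
  show 1 ≤ ‖f i ω - x‖
  linarith

lemma tendstoInMeasure_pi {κ : Type*} [Fintype κ] {E : κ → Type*}
    [∀ k, PseudoEMetricSpace (E k)] {f : ι → Ω → ∀ k, E k} {g : Ω → ∀ k, E k}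
    (h : ∀ k, TendstoInMeasure μ (fun i ω => f i ω k) l fun ω => g ω k) :
    TendstoInMeasure μ f l g := by
  intro ε hε
  have hsum : Tendsto (fun i => ∑ k, μ {ω | ε ≤ edist (f i ω k) (g ω k)}) l (𝓝 0) := by
    simpa using tendsto_finsetSum Finset.univ fun k _ => h k ε hε
  refine tendsto_of_tendsto_of_tendsto_of_le_of_le tendsto_const_nhds hsum (fun _ => zero_le)
    fun i => (measure_mono fun ω hω => ?_).trans (measure_iUnion_fintype_le _ _)
  have hω' : ε ≤ edist (f i ω) (g ω) := hω
  rw [edist_pi_def] at hω'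
  obtain ⟨k, -, hk⟩ := (Finset.le_sup_iff hε).1 hω'
  exact Set.mem_iUnion.2 ⟨k, hk⟩

lemma TendstoInMeasure.comp_continuousAt {E F : Type*} [PseudoEMetricSpace E]
    [PseudoEMetricSpace F] {f : ι → Ω → E} {x : E} {φ : E → F}
    (hf : TendstoInMeasure μ f l fun _ => x) (hφ : ContinuousAt φ x) :
    TendstoInMeasure μ (fun i ω => φ (f i ω)) l fun _ => φ x := by
  intro ε hε
  obtain ⟨δ, hδ, hφδ⟩ := EMetric.continuousAt_iff.1 hφ ε hε
  refine tendsto_of_tendsto_of_tendsto_of_le_of_le tendsto_const_nhds (hf δ hδ)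
    (fun _ => zero_le) fun i => measure_mono fun ω (hω : ε ≤ edist (φ (f i ω)) (φ x)) =>
      not_lt.1 fun hlt => (hφδ hlt).not_ge hω

lemma abs_sum_sum_mul_mul_le {n : Type*} [Fintype n] (x : n → ℝ) (S : n → n → ℝ) :
    |∑ j, ∑ k, x j * S j k * x k| ≤ Fintype.card n ^ 2 * (‖x‖ ^ 2 * ‖S‖) := by
  have hterm : ∀ j k, |x j * S j k * x k| ≤ ‖x‖ ^ 2 * ‖S‖ := fun j k => by
    have hSjk : |S j k| ≤ ‖S‖ := (norm_le_pi_norm (S j) k).trans (norm_le_pi_norm S j)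
    rw [abs_mul, abs_mul, mul_right_comm, sq]
    gcongr
    exacts [norm_le_pi_norm x j, norm_le_pi_norm x k]
  calc |∑ j, ∑ k, x j * S j k * x k| ≤ ∑ j, ∑ k, |x j * S j k * x k| :=
        (Finset.abs_sum_le_sum_abs _ _).trans (Finset.sum_le_sum fun j _ =>
          Finset.abs_sum_le_sum_abs _ _)
    _ ≤ ∑ _j : n, ∑ _k : n, ‖x‖ ^ 2 * ‖S‖ := by gcongr with j _ k _; exact hterm j k
    _ = Fintype.card n ^ 2 * (‖x‖ ^ 2 * ‖S‖) := by simp [sq, mul_assoc]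

lemma BoundedInProbability.sum_sum_mul_mul {n : Type*} [Fintype n] {x : ι → Ω → n → ℝ}
    {S : ι → Ω → n → n → ℝ} (hx : BoundedInProbability μ x l)
    (hS : BoundedInProbability μ S l) :
    BoundedInProbability μ (fun i ω => ∑ j, ∑ k, x i ω j * S i ω j k * x i ω k) l := by
  refine .of_eventually fun ε hε => ?_
  obtain ⟨Mx, hx⟩ := hx.exists_eventually_measure_lt (ENNReal.half_pos hε.ne')
  obtain ⟨MS, hS⟩ := hS.exists_eventually_measure_lt (ENNReal.half_pos hε.ne')
  refine ⟨Fintype.card n ^ 2 * (Mx ^ 2 * MS), ?_⟩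
  filter_upwards [hx, hS] with i hxi hSi
  calc _ ≤ μ ({ω | Mx < ‖x i ω‖} ∪ {ω | MS < ‖S i ω‖}) := measure_mono fun ω hω => by
        by_contra! hle
        simp only [Set.mem_union, Set.mem_ofPred_eq, not_or, not_lt] at hle
        refine hω.not_ge ((abs_sum_sum_mul_mul_le _ _).trans ?_)
        gcongr
        exacts [hle.1, hle.2]
    _ ≤ ε / 2 + ε / 2 := (measure_union_le _ _).trans (add_le_add hxi.le hSi.le)
    _ = ε := ENNReal.add_halves ε

lemma lt_natCast_mul_sq_of_abs_sub_lt {q x p M : ℝ} {n : ℕ} (hn : M / (|p| / 2) ^ 2 < n)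
    (hq : |q| ≤ M) (hx : |x - p| < |p| / 2) : q < n * x ^ 2 := by
  have hp : 0 < |p| / 2 := (abs_nonneg _).trans_lt hx
  have hxp : |p| / 2 < |x| := by linarith [abs_sub_abs_le_abs_sub p x, abs_sub_comm p x]
  have hx2 : (|p| / 2) ^ 2 ≤ x ^ 2 := sq_abs x ▸ pow_le_pow_left₀ hp.le hxp.le 2
  have hMn : M < n * (|p| / 2) ^ 2 := (div_lt_iff₀ (by positivity)).1 hn
  linarith [le_abs_self q, mul_le_mul_of_nonneg_left hx2 n.cast_nonneg]

lemma tendsto_measure_compl_lt_natCast_mul_sq {Q P : ℕ → Ω → ℝ} {p : ℝ}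
    (hQ : BoundedInProbability μ Q atTop) (hP : TendstoInMeasure μ P atTop fun _ => p)
    (hp : p ≠ 0) : Tendsto (fun n => μ {ω | Q n ω < n * P n ω ^ 2}ᶜ) atTop (𝓝 0) := by
  refine ENNReal.tendsto_nhds_zero.2 fun ε hε => ?_
  obtain ⟨M, hM⟩ := hQ.exists_eventually_measure_lt (ENNReal.half_pos hε.ne')
  have hPclose := ENNReal.tendsto_nhds_zero.1
    (tendstoInMeasure_iff_dist.1 hP (|p| / 2) (by positivity)) _ (ENNReal.half_pos hε.ne')
  filter_upwards [hM, hPclose,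
    tendsto_natCast_atTop_atTop.eventually_gt_atTop (M / (|p| / 2) ^ 2)] with n hQn hPn hn
  calc _ ≤ μ ({ω | M < ‖Q n ω‖} ∪ {ω | |p| / 2 ≤ dist (P n ω) p}) :=
        measure_mono fun ω hω => by
          by_contra! hle
          simp only [Set.mem_union, Set.mem_ofPred_eq, not_or, not_lt, not_le, Real.norm_eq_abs,
            Real.dist_eq] at hle
          exact hω (lt_natCast_mul_sq_of_abs_sub_lt hn hle.1 hle.2)
    _ ≤ ε / 2 + ε / 2 := (measure_union_le _ _).trans (add_le_add hQn.le hPn)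
    _ = ε := ENNReal.add_halves ε

lemma tendsto_toReal_measure_of_tendsto_measure_compl [IsProbabilityMeasure μ] {A : ι → Set Ω}
    (h : Tendsto (fun i => μ (A i)ᶜ) l (𝓝 0)) : Tendsto (fun i => (μ (A i)).toReal) l (𝓝 1) := by
  have hlow : Tendsto (fun i => 1 - μ (A i)ᶜ) l (𝓝 1) := by
    simpa using ENNReal.Tendsto.sub tendsto_const_nhds h (.inl one_ne_top)
  have hA : Tendsto (fun i => μ (A i)) l (𝓝 1) :=
    tendsto_of_tendsto_of_tendsto_of_le_of_le hlow tendsto_const_nhds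
      (fun i => tsub_le_iff_right.2 (measure_univ (μ := μ) ▸ measure_univ_le_add_compl (A i)))
      fun _ => prob_le_one
  exact ENNReal.toReal_one ▸ (ENNReal.tendsto_toReal one_ne_top).comp hA

end MeasureTheory

theorem power_tendsto_one_general
    {Ω : Type*} [MeasurableSpace Ω]
    (Pr : Measure Ω) [IsProbabilityMeasure Pr]
    {K : ℕ}
    (ψP : Fin K → ℝ) (ψn : Fin K → ℕ → Ω → ℝ)
    -- consistency: ψ_{k,n} → ψ_{k,P} in probability
    (hcons : ∀ k, TendstoInMeasure Pr (fun n ω => ψn k n ω) atTop (fun _ => ψP k))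
    -- alternative: ∏ₖ ψ_{k,P} ≠ 0
    (halt : ∏ k, ψP k ≠ 0)
    (Sn : ℕ → Ω → Fin K → Fin K → ℝ)
    -- (Sn) is bounded in probability
    (hSbd : ∀ ε : ℝ, 0 < ε → ∃ M : ℝ,
      Filter.limsup (fun n => Pr {ω | M < ‖Sn n ω‖}) atTop ≤ ENNReal.ofReal ε)
    (α : ℝ) :
    Tendsto
      (fun n => (Pr {ω |
          (stdNormalQuantile (1 - α / 2)) ^ 2 *
            (∑ j, ∑ k, (∏ l ∈ Finset.univ.erase j, ψn l n ω) * Sn n ω j k *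
              (∏ l ∈ Finset.univ.erase k, ψn l n ω))
          < (n : ℝ) * (∏ k, ψn k n ω) ^ 2 }).toReal)
      atTop (nhds 1) := by
  have hψ : TendstoInMeasure Pr (fun n ω k => ψn k n ω) atTop fun _ => ψP :=
    tendstoInMeasure_pi hcons
  have hγ := hψ.comp_continuousAt (φ := fun x j => ∏ l ∈ Finset.univ.erase j, x l)
    (continuous_pi fun j => continuous_finsetProd _ fun l _ => continuous_apply l).continuousAt
  have hprod : TendstoInMeasure Pr (fun n ω => ∏ k, ψn k n ω) atTop fun _ => ∏ k, ψP k :=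
    hψ.comp_continuousAt (continuous_finsetProd _ fun k _ => continuous_apply k).continuousAt
  have hS : BoundedInProbability Pr Sn atTop := hSbd
  have hQ := (hγ.boundedInProbability.sum_sum_mul_mul hS).const_mul
    (stdNormalQuantile (1 - α / 2) ^ 2)
  exact tendsto_toReal_measure_of_tendsto_measure_compl
    (tendsto_measure_compl_lt_natCast_mul_sq hQ hprod halt)

/-- **Theorem 2 (power under fixed alternatives).**
If each estimator `ψn k` converges in probability to `ψP k`, the product of the true parameters
is nonzero, and the sequence of covariance estimators `Sn` is bounded in probability (i.e. for
every `ε > 0` there is `M` with `limsup_n P(‖Sn‖ > M) ≤ ε`), then the rejection probability of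
the level-`α` test `R_{n,α} = { n (∏ k ψ_{k,n})² > q_{1-α/2}² γn' Sn γn }` converges to `1`. -/
theorem power_tendsto_one
    {Ω : Type*} [MeasurableSpace Ω]
    (Pr : Measure Ω) [IsProbabilityMeasure Pr]
    {K : ℕ} (hK : 1 ≤ K)
    (ψP : Fin K → ℝ) (ψn : Fin K → ℕ → Ω → ℝ)
    -- consistency: ψ_{k,n} → ψ_{k,P} in probability
    (hcons : ∀ k, TendstoInMeasure Pr (fun n ω => ψn k n ω) atTop (fun _ => ψP k))
    -- alternative: ∏ₖ ψ_{k,P} ≠ 0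
    (halt : ∏ k, ψP k ≠ 0)
    (Sn : ℕ → Ω → Fin K → Fin K → ℝ)
    -- (Sn) is bounded in probability
    (hSbd : ∀ ε : ℝ, 0 < ε → ∃ M : ℝ,
      Filter.limsup (fun n => Pr {ω | M < ‖Sn n ω‖}) atTop ≤ ENNReal.ofReal ε)
    (α : ℝ) (hα0 : 0 < α) (hα1 : α < 1) :
    Tendsto
      (fun n => (Pr {ω |
          (stdNormalQuantile (1 - α / 2)) ^ 2 *
            (∑ j, ∑ k, (∏ l ∈ Finset.univ.erase j, ψn l n ω) * Sn n ω j k *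
              (∏ l ∈ Finset.univ.erase k, ψn l n ω))
          < (n : ℝ) * (∏ k, ψn k n ω) ^ 2 }).toReal)
      atTop (nhds 1) :=
  power_tendsto_one_general Pr ψP ψn hcons halt Sn hSbd α
end

section
/- The instrumental variable (Wald) influence function has mean zero: E[ ( (Y − μ_Z)·(π_1 − π_0) − (A − π_Z)·(μ_1 − μ_0) ) · ( Z/ζ − (1−Z)/(1−ζ) ) / (π_1 − π_0)^2 ] = 0. -/
open MeasureTheory

/-!
Because `Z` is `{0,1}`-valued, `Z (1 - Z) = 0`, so the contrast `Z/ζ - (1-Z)/(1-ζ)` splits the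
residual `X - μ_Z` into the two arms `(X - μ₁) Z / ζ` and `(X - μ₀) (1 - Z) / (1 - ζ)`. Since
`E[Z] = ζ`, each arm integrates to `(E[X Z] - μ₁ ζ) / ζ = 0` (resp. with `1 - Z`), by the very
definition of `μ₁` and `μ₀`. The influence function is a fixed linear combination of these
weighted residuals for `X = Y` and `X = A`, hence has mean zero.
-/

theorem norm_le_one_of_zero_or_one {z : ℝ} (hz : z = 0 ∨ z = 1) : ‖z‖ ≤ 1 := by
  rcases hz with rfl | rfl <;> simp

theorem one_sub_zero_or_one {z : ℝ} (hz : z = 0 ∨ z = 1) : 1 - z = 0 ∨ 1 - z = 1 := by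
  rcases hz with rfl | rfl <;> simp

section ZeroOrOne

variable {Ω : Type*} [MeasurableSpace Ω] {P : Measure Ω} {Z : Ω → ℝ}

theorem integrable_of_zero_or_one [IsFiniteMeasure P] (hZ : AEStronglyMeasurable Z P)
    (hZ01 : ∀ ω, Z ω = 0 ∨ Z ω = 1) : Integrable Z P :=
  .of_bound hZ 1 (ae_of_all _ fun ω => norm_le_one_of_zero_or_one (hZ01 ω))

theorem MeasureTheory.Integrable.mul_zero_or_one {X : Ω → ℝ} (hX : Integrable X P)
    (hZ : AEStronglyMeasurable Z P) (hZ01 : ∀ ω, Z ω = 0 ∨ Z ω = 1) :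
    Integrable (fun ω => X ω * Z ω) P :=
  hX.mul_bdd hZ (ae_of_all _ fun ω => norm_le_one_of_zero_or_one (hZ01 ω))

theorem integrable_sub_mul_div_of_zero_or_one [IsFiniteMeasure P] {X : Ω → ℝ}
    (hX : Integrable X P) (hZ : AEStronglyMeasurable Z P) (hZ01 : ∀ ω, Z ω = 0 ∨ Z ω = 1)
    (m c : ℝ) : Integrable (fun ω => (X ω - m) * Z ω / c) P :=
  ((hX.sub (integrable_const m)).mul_zero_or_one hZ hZ01).div_const c

theorem integral_eq_measureReal_of_zero_or_one (hZ : Measurable Z)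
    (hZ01 : ∀ ω, Z ω = 0 ∨ Z ω = 1) : ∫ ω, Z ω ∂P = P.real {ω | Z ω = 1} := by
  have hZ_eq : Z = {ω | Z ω = 1}.indicator 1 := by
    funext ω
    rcases hZ01 ω with h | h <;> simp [Set.indicator, h]
  conv_lhs => rw [hZ_eq]
  exact integral_indicator_one (hZ (measurableSet_singleton 1))

end ZeroOrOne

section Contrast

variable {Ω : Type*} [MeasurableSpace Ω] {P : Measure Ω}

/-- For `c = 0` the left side is `0` because `x / 0 = 0`. -/
theorem integral_sub_mul_div_eq_zero {X w : Ω → ℝ} {c m : ℝ}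
    (hXw : Integrable (fun ω => X ω * w ω) P) (hw : Integrable w P)
    (hc : ∫ ω, w ω ∂P = c) (hm : m = (∫ ω, X ω * w ω ∂P) / c) :
    ∫ ω, (X ω - m) * w ω / c ∂P = 0 := by
  have h_int : ∫ ω, (X ω - m) * w ω ∂P = (∫ ω, X ω * w ω ∂P) - m * c := by
    simp_rw [sub_mul]
    rw [integral_sub hXw (hw.const_mul m), integral_const_mul, hc]
  rw [integral_div, h_int, hm]
  rcases eq_or_ne c 0 with rfl | hc0
  · simp
  · rw [div_mul_cancel₀ _ hc0, sub_self, zero_div]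

theorem centered_mul_contrast_eq {z : ℝ} (hz : z = 0 ∨ z = 1) (x m₁ m₀ ζ : ℝ) :
    (x - (z * m₁ + (1 - z) * m₀)) * (z / ζ - (1 - z) / (1 - ζ))
      = (x - m₁) * z / ζ - (x - m₀) * (1 - z) / (1 - ζ) := by
  rcases hz with rfl | rfl <;> ring

variable [IsProbabilityMeasure P] {X Z : Ω → ℝ} {ζ m₁ m₀ : ℝ}

theorem integrable_centered_mul_contrast (hX : Integrable X P) (hZ : AEStronglyMeasurable Z P)
    (hZ01 : ∀ ω, Z ω = 0 ∨ Z ω = 1) :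
    Integrable
      (fun ω => (X ω - (Z ω * m₁ + (1 - Z ω) * m₀)) * (Z ω / ζ - (1 - Z ω) / (1 - ζ))) P := by
  simp_rw [centered_mul_contrast_eq (hZ01 _)]
  exact (integrable_sub_mul_div_of_zero_or_one hX hZ hZ01 m₁ ζ).sub
    (integrable_sub_mul_div_of_zero_or_one hX (aestronglyMeasurable_const.sub hZ)
      (fun ω => one_sub_zero_or_one (hZ01 ω)) m₀ (1 - ζ))

theorem integral_centered_mul_contrast_eq_zero (hX : Integrable X P)
    (hZ : AEStronglyMeasurable Z P) (hZ01 : ∀ ω, Z ω = 0 ∨ Z ω = 1) (hζ : ∫ ω, Z ω ∂P = ζ)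
    (hm₁ : m₁ = (∫ ω, X ω * Z ω ∂P) / ζ) (hm₀ : m₀ = (∫ ω, X ω * (1 - Z ω) ∂P) / (1 - ζ)) :
    ∫ ω, (X ω - (Z ω * m₁ + (1 - Z ω) * m₀)) * (Z ω / ζ - (1 - Z ω) / (1 - ζ)) ∂P = 0 := by
  have hZi : Integrable Z P := integrable_of_zero_or_one hZ hZ01
  have h1Z : AEStronglyMeasurable (fun ω => 1 - Z ω) P := aestronglyMeasurable_const.sub hZ
  have h1Z01 : ∀ ω, 1 - Z ω = 0 ∨ 1 - Z ω = 1 := fun ω => one_sub_zero_or_one (hZ01 ω)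
  have h1Zi : Integrable (fun ω => 1 - Z ω) P := (integrable_const 1).sub hZi
  have h1ζ : ∫ ω, 1 - Z ω ∂P = 1 - ζ := by
    rw [integral_sub (integrable_const 1) hZi, hζ]
    simp
  simp_rw [centered_mul_contrast_eq (hZ01 _)]
  rw [integral_sub (integrable_sub_mul_div_of_zero_or_one hX hZ hZ01 m₁ ζ)
      (integrable_sub_mul_div_of_zero_or_one hX h1Z h1Z01 m₀ (1 - ζ)),
    integral_sub_mul_div_eq_zero (hX.mul_zero_or_one hZ hZ01) hZi hζ hm₁,
    integral_sub_mul_div_eq_zero (hX.mul_zero_or_one h1Z h1Z01) h1Zi h1ζ hm₀,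
    sub_zero]

end Contrast

theorem iv_influence_function_mean_zero_general
    {Ω : Type*} [MeasurableSpace Ω]
    (Pr : Measure Ω) [IsProbabilityMeasure Pr]
    (Z : Ω → ℝ) (hZ : Measurable Z) (hZ01 : ∀ ω, Z ω = 0 ∨ Z ω = 1)
    (A : Ω → ℝ) (hA : Measurable A) (hA01 : ∀ ω, A ω = 0 ∨ A ω = 1)
    (Y : Ω → ℝ) (hY : Integrable Y Pr)
    (ζ : ℝ) (hζ : ζ = (Pr {ω | Z ω = 1}).toReal)
    (μ1 μ0 π1 π0 : ℝ)
    (hμ1 : μ1 = (∫ ω, Y ω * Z ω ∂Pr) / ζ)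
    (hμ0 : μ0 = (∫ ω, Y ω * (1 - Z ω) ∂Pr) / (1 - ζ))
    (hπ1 : π1 = (∫ ω, A ω * Z ω ∂Pr) / ζ)
    (hπ0 : π0 = (∫ ω, A ω * (1 - Z ω) ∂Pr) / (1 - ζ)) :
    ∫ ω, ((Y ω - (Z ω * μ1 + (1 - Z ω) * μ0)) * (π1 - π0)
        - (A ω - (Z ω * π1 + (1 - Z ω) * π0)) * (μ1 - μ0))
      * (Z ω / ζ - (1 - Z ω) / (1 - ζ)) / (π1 - π0) ^ 2 ∂Pr = 0 := by
  have hZm : AEStronglyMeasurable Z Pr := hZ.aestronglyMeasurable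
  have hAi : Integrable A Pr := integrable_of_zero_or_one hA.aestronglyMeasurable hA01
  have hζ_int : ∫ ω, Z ω ∂Pr = ζ := by
    rw [integral_eq_measureReal_of_zero_or_one hZ hZ01, hζ, measureReal_def]
  rw [integral_div, div_eq_zero_iff]
  left
  calc ∫ ω, ((Y ω - (Z ω * μ1 + (1 - Z ω) * μ0)) * (π1 - π0)
        - (A ω - (Z ω * π1 + (1 - Z ω) * π0)) * (μ1 - μ0)) * (Z ω / ζ - (1 - Z ω) / (1 - ζ)) ∂Pr
      = ∫ ω, (π1 - π0) * ((Y ω - (Z ω * μ1 + (1 - Z ω) * μ0)) * (Z ω / ζ - (1 - Z ω) / (1 - ζ)))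
          - (μ1 - μ0) * ((A ω - (Z ω * π1 + (1 - Z ω) * π0)) * (Z ω / ζ - (1 - Z ω) / (1 - ζ)))
          ∂Pr := integral_congr_ae (ae_of_all _ fun ω => by ring)
    _ = 0 := by
      rw [integral_sub ((integrable_centered_mul_contrast hY hZm hZ01).const_mul _)
          ((integrable_centered_mul_contrast hAi hZm hZ01).const_mul _),
        integral_const_mul, integral_const_mul,
        integral_centered_mul_contrast_eq_zero hY hZm hZ01 hζ_int hμ1 hμ0,
        integral_centered_mul_contrast_eq_zero hAi hZm hZ01 hζ_int hπ1 hπ0]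
      ring

/-- **The instrumental variable (Wald) influence function has mean zero.**
With binary instrument `Z` and treatment `A`, `ζ = P(Z = 1) ∈ (0,1)`,
`μ_z = E[Y·1{Z=z}]/P(Z=z)` and `π_z = E[A·1{Z=z}]/P(Z=z)` for `z ∈ {0,1}` with `π₁ ≠ π₀`,
we have
`E[((Y - μ_Z)(π₁ - π₀) - (A - π_Z)(μ₁ - μ₀))·(Z/ζ - (1-Z)/(1-ζ))/(π₁ - π₀)²] = 0`.
(Since `Z` is `{0,1}`-valued, `1{Z=1} = Z` and `1{Z=0} = 1 - Z`, and
`μ_Z = Z·μ₁ + (1-Z)·μ₀`, `π_Z = Z·π₁ + (1-Z)·π₀`.) -/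
theorem iv_influence_function_mean_zero
    {Ω : Type*} [MeasurableSpace Ω]
    (Pr : Measure Ω) [IsProbabilityMeasure Pr]
    (Z : Ω → ℝ) (hZ : Measurable Z) (hZ01 : ∀ ω, Z ω = 0 ∨ Z ω = 1)
    (A : Ω → ℝ) (hA : Measurable A) (hA01 : ∀ ω, A ω = 0 ∨ A ω = 1)
    (Y : Ω → ℝ) (hY : Integrable Y Pr)
    (ζ : ℝ) (hζ : ζ = (Pr {ω | Z ω = 1}).toReal) (hζ0 : 0 < ζ) (hζ1 : ζ < 1)
    (μ1 μ0 π1 π0 : ℝ)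
    (hμ1 : μ1 = (∫ ω, Y ω * Z ω ∂Pr) / ζ)
    (hμ0 : μ0 = (∫ ω, Y ω * (1 - Z ω) ∂Pr) / (1 - ζ))
    (hπ1 : π1 = (∫ ω, A ω * Z ω ∂Pr) / ζ)
    (hπ0 : π0 = (∫ ω, A ω * (1 - Z ω) ∂Pr) / (1 - ζ))
    (hrel : π1 ≠ π0) :
    ∫ ω, ((Y ω - (Z ω * μ1 + (1 - Z ω) * μ0)) * (π1 - π0)
        - (A ω - (Z ω * π1 + (1 - Z ω) * π0)) * (μ1 - μ0))
      * (Z ω / ζ - (1 - Z ω) / (1 - ζ)) / (π1 - π0) ^ 2 ∂Pr = 0 :=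
  iv_influence_function_mean_zero_general Pr Z hZ hZ01 A hA hA01 Y hY ζ hζ μ1 μ0 π1 π0 hμ1 hμ0 hπ1
    hπ0
end

section
/- Under conditional ignorability, consistency, and positivity, the average causal effect is identified by the backdoor formula: E[Y_1 − Y_0] = E[ E[A·Y | 𝒢]/π − E[(1−A)·Y | 𝒢]/(1−π) ]. -/
/-! Conditional independence is only tested on bounded functions, but truncating `Z` and passing
to the limit under the conditional expectation (dominated convergence) extends it to
`E[Z ψ(X) | 𝒢] = E[Z | 𝒢] E[ψ(X) | 𝒢]` for integrable `Z`. For a `{0,1}`-valued `B` this reads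
`E[B Z | 𝒢] = E[B | 𝒢] E[Z | 𝒢]`; applied to `B = A, Z = Y₁` and `B = 1 - A, Z = Y₀`, where
consistency turns `A Y` into `A Y₁` and `(1 - A) Y` into `(1 - A) Y₀`, positivity lets us divide:
`E[A Y | 𝒢] / π = E[Y₁ | 𝒢]` and `E[(1 - A) Y | 𝒢] / (1 - π) = E[Y₀ | 𝒢]` a.e. Integrating
gives the backdoor formula. -/

open MeasureTheory ProbabilityTheory Filter

/-- Conditional independence of `f` and `g` given the sub-σ-algebra `m`, characterized via
bounded measurable test functions: for all bounded measurable `φ ψ`,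
`E[φ(f) ψ(g) | m] = E[φ(f) | m] · E[ψ(g) | m]` almost everywhere. -/
def CondIndepFun' {Ω α β : Type*} {m0 : MeasurableSpace Ω} [MeasurableSpace α]
    [MeasurableSpace β] (m : MeasurableSpace Ω) (μ : @MeasureTheory.Measure Ω m0)
    (f : Ω → α) (g : Ω → β) : Prop :=
  ∀ (φ : α → ℝ) (ψ : β → ℝ), Measurable φ → Measurable ψ →
    (∃ B : ℝ, ∀ x, |φ x| ≤ B) → (∃ B : ℝ, ∀ x, |ψ x| ≤ B) →
    (μ[fun ω => φ (f ω) * ψ (g ω)|m]) =ᵐ[μ]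
      fun ω => (μ[fun ω' => φ (f ω')|m]) ω * (μ[fun ω' => ψ (g ω')|m]) ω

open Topology

theorem condExp_one_sub_ae_eq {Ω : Type*} {m m0 : MeasurableSpace Ω} {μ : Measure Ω}
    [IsFiniteMeasure μ] (hm : m ≤ m0) {f : Ω → ℝ} (hf : Integrable f μ) :
    μ[fun ω => 1 - f ω|m] =ᵐ[μ] fun ω => 1 - μ[f|m] ω := by
  filter_upwards [condExp_sub (integrable_const 1) hf m] with ω hω
  rw [show (fun ω => 1 - f ω) = (fun _ => (1 : ℝ)) - f from rfl, hω, condExp_const hm]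
  rfl

namespace CondIndepFun'

variable {Ω α : Type*} {m m0 : MeasurableSpace Ω} [MeasurableSpace α] {μ : Measure Ω}

theorem comp_right {β γ : Type*} [MeasurableSpace β] [MeasurableSpace γ] {f : Ω → α}
    {g : Ω → β} (h : CondIndepFun' m μ f g) {k : β → γ} (hk : Measurable k) :
    CondIndepFun' m μ f (fun ω => k (g ω)) :=
  fun φ ψ hφ hψ hφb ⟨B, hB⟩ =>
    h φ (fun b => ψ (k b)) hφ (hψ.comp hk) hφb ⟨B, fun b => hB (k b)⟩

variable [IsFiniteMeasure μ] {Z : Ω → ℝ}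

theorem condExp_mul_ae_eq {X : Ω → α} {ψ : α → ℝ} (h : CondIndepFun' m μ Z X)
    (hZ : Integrable Z μ) (hX : Measurable X) (hψ : Measurable ψ) (hψb : ∃ B, ∀ x, |ψ x| ≤ B) :
    μ[fun ω => Z ω * ψ (X ω)|m] =ᵐ[μ] fun ω => μ[Z|m] ω * μ[fun ω => ψ (X ω)|m] ω := by
  obtain ⟨R, hψR⟩ := hψb
  set g := μ[fun ω => ψ (X ω)|m]
  have hg_bdd : ∀ᵐ ω ∂μ, ‖g ω‖ ≤ R :=
    ae_bdd_abs_condExp_of_ae_bdd_abs (.of_forall fun ω => hψR (X ω))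
  have htrunc (n : ℕ) : Integrable (truncation Z n) μ :=
    hZ.aestronglyMeasurable.integrable_truncation
  have htrunc_g (n : ℕ) : Integrable (fun ω => truncation Z n ω * g ω) μ :=
    (htrunc n).mul_bdd integrable_condExp.aestronglyMeasurable hg_bdd
  have htrunc_lim (ω : Ω) : Tendsto (fun n : ℕ => truncation Z n ω) atTop (𝓝 (Z ω)) :=
    tendsto_const_nhds.congr' <| (tendsto_natCast_atTop_atTop.eventually_gt_atTop |Z ω|).mono
      fun n hn => (truncation_eq_self hn).symm
  have hfactor (n : ℕ) : μ[fun ω => truncation Z n ω * ψ (X ω)|m]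
      =ᵐ[μ] μ[fun ω => truncation Z n ω * g ω|m] :=
    (h _ ψ (measurable_id.indicator measurableSet_Ioc) hψ ⟨_, abs_truncation_le_bound id n⟩
      ⟨R, hψR⟩).trans
      (condExp_mul_of_stronglyMeasurable_right stronglyMeasurable_condExp (htrunc_g n)
        (htrunc n)).symm
  have hlim : μ[fun ω => Z ω * ψ (X ω)|m] =ᵐ[μ] μ[fun ω => Z ω * g ω|m] := by
    refine tendsto_condExp_unique _ _ _ _
      (fun n => (htrunc n).mul_bdd (hψ.comp hX).aestronglyMeasurable
        (.of_forall fun ω => hψR (X ω))) htrunc_g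
      (.of_forall fun ω => (htrunc_lim ω).mul_const _)
      (.of_forall fun ω => (htrunc_lim ω).mul_const _)
      (fun ω => |Z ω| * R) (hZ.abs.mul_const _) (fun ω => |Z ω| * R) (hZ.abs.mul_const _)
      (fun n => .of_forall fun ω => ?_) (fun n => hg_bdd.mono fun ω hω => ?_) hfactor
    · rw [norm_mul]
      exact mul_le_mul (abs_truncation_le_abs_self _ _ _) (hψR _) (norm_nonneg _) (abs_nonneg _)
    · rw [norm_mul]
      exact mul_le_mul (abs_truncation_le_abs_self _ _ _) hω (norm_nonneg _) (abs_nonneg _)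
  exact hlim.trans (condExp_mul_of_stronglyMeasurable_right stronglyMeasurable_condExp
    (hZ.mul_bdd integrable_condExp.aestronglyMeasurable hg_bdd) hZ)

theorem condExp_mul_div_ae_eq_of_binary {B : Ω → ℝ} (h : CondIndepFun' m μ Z B)
    (hZ : Integrable Z μ) (hB : Measurable B) (hB01 : ∀ ω, B ω = 0 ∨ B ω = 1) {ρ : Ω → ℝ}
    (hρ : ρ =ᵐ[μ] μ[B|m]) (hρ0 : ∀ᵐ ω ∂μ, ρ ω ≠ 0) :
    (fun ω => μ[fun ω => B ω * Z ω|m] ω / ρ ω) =ᵐ[μ] μ[Z|m] := by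
  have hB_ind (ω : Ω) : ({1} : Set ℝ).indicator 1 (B ω) = B ω := by
    rcases hB01 ω with h | h <;> simp [h]
  have hmul := h.condExp_mul_ae_eq (ψ := ({1} : Set ℝ).indicator 1) hZ hB
    (measurable_const.indicator (measurableSet_singleton 1))
    ⟨1, fun a => by by_cases ha : a = 1 <;> simp [ha]⟩
  simp only [hB_ind] at hmul
  filter_upwards [hmul, hρ, hρ0] with ω hmulω hρω hρω0
  simp only [mul_comm (B _)]
  rw [hmulω, ← hρω, mul_div_cancel_right₀ _ hρω0]

end CondIndepFun'

/-- **Identification of the average causal effect by the backdoor formula.**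
Under consistency (`Y = A·Y₁ + (1-A)·Y₀`), conditional ignorability of each potential outcome
given `𝒢 = σ(C)`, and positivity of the propensity score `π = E[A | 𝒢]`, the average causal
effect is identified: `E[Y₁ - Y₀] = E[ E[A·Y | 𝒢]/π - E[(1-A)·Y | 𝒢]/(1-π) ]`. -/
theorem backdoor_identification
    {Ω 𝓒 : Type*} [MeasurableSpace Ω] [MeasurableSpace 𝓒] [StandardBorelSpace 𝓒]
    (Pr : Measure Ω) [IsProbabilityMeasure Pr]
    (C : Ω → 𝓒) (hC : Measurable C)
    (A : Ω → ℝ) (hA : Measurable A) (hA01 : ∀ ω, A ω = 0 ∨ A ω = 1)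
    (Y0 Y1 : Ω → ℝ) (hY0m : Measurable Y0) (hY1m : Measurable Y1)
    (hY0 : Integrable Y0 Pr) (hY1 : Integrable Y1 Pr)
    -- consistency
    (Y : Ω → ℝ) (hYdef : Y = fun ω => A ω * Y1 ω + (1 - A ω) * Y0 ω)
    (𝒢 : MeasurableSpace Ω) (h𝒢 : 𝒢 = MeasurableSpace.comap C inferInstance)
    (π : Ω → ℝ) (hπ : π = Pr[A|𝒢])
    -- positivity: ε ≤ π ≤ 1 - ε a.s. for some ε > 0
    (hpos : ∃ ε : ℝ, 0 < ε ∧ ∀ᵐ ω ∂Pr, ε ≤ π ω ∧ π ω ≤ 1 - ε)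
    -- conditional ignorability
    (hig1 : CondIndepFun' 𝒢 Pr Y1 A)
    (hig0 : CondIndepFun' 𝒢 Pr Y0 A) :
    ∫ ω, (Y1 ω - Y0 ω) ∂Pr
      = ∫ ω, ((Pr[fun ω' => A ω' * Y ω'|𝒢]) ω / π ω
          - (Pr[fun ω' => (1 - A ω') * Y ω'|𝒢]) ω / (1 - π ω)) ∂Pr := by
  have h𝒢le : 𝒢 ≤ _ := h𝒢.trans_le hC.comap_le
  obtain ⟨ε, hε, hπε⟩ := hpos
  have hAY : (fun ω => A ω * Y ω) = fun ω => A ω * Y1 ω := by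
    funext ω; rcases hA01 ω with h | h <;> simp [hYdef, h]
  have hA'Y : (fun ω => (1 - A ω) * Y ω) = fun ω => (1 - A ω) * Y0 ω := by
    funext ω; rcases hA01 ω with h | h <;> simp [hYdef, h]
  have hAint : Integrable A Pr := .of_bound hA.aestronglyMeasurable 1
    (.of_forall fun ω => by rcases hA01 ω with h | h <;> simp [h])
  have htreated : (fun ω => Pr[fun ω => A ω * Y ω|𝒢] ω / π ω) =ᵐ[Pr] Pr[Y1|𝒢] := by
    rw [hAY]
    exact hig1.condExp_mul_div_ae_eq_of_binary hY1 hA hA01 (by rw [hπ])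
      (hπε.mono fun ω hω => (hε.trans_le hω.1).ne')
  have hcontrol : (fun ω => Pr[fun ω => (1 - A ω) * Y ω|𝒢] ω / (1 - π ω)) =ᵐ[Pr] Pr[Y0|𝒢] := by
    rw [hA'Y]
    exact (hig0.comp_right (measurable_const.sub measurable_id)).condExp_mul_div_ae_eq_of_binary
      hY0 (measurable_const.sub hA) (fun ω => by rcases hA01 ω with h | h <;> simp [h])
      (hπ ▸ (condExp_one_sub_ae_eq h𝒢le hAint).symm) (hπε.mono fun ω hω => by linarith [hω.2])
  calc ∫ ω, (Y1 ω - Y0 ω) ∂Pr = ∫ ω, Y1 ω ∂Pr - ∫ ω, Y0 ω ∂Pr := integral_sub hY1 hY0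
    _ = ∫ ω, (Pr[Y1|𝒢] ω - Pr[Y0|𝒢] ω) ∂Pr := by
      rw [integral_sub integrable_condExp integrable_condExp, integral_condExp h𝒢le,
        integral_condExp h𝒢le]
    _ = _ := integral_congr_ae (htreated.sub hcontrol).symm
end
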